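/- Let u₁, u₂, v₁, v₂ ∈ ℝ^n satisfy ⟨u₁,u₂⟩ = 0 and ⟨v₁,v₂⟩ = 0, and define F̃ : 𝒞_n → ℝ by F̃(x) = (⟨u₁,x⟩² + ⟨u₂,x⟩²)(⟨v₁,x⟩² + ⟨v₂,x⟩²). Then the derivative matrix of F̃ satisfies ‖D^{F̃}‖_op ≤ 40 n · max(‖u₁‖₂⁴, ‖u₂‖₂⁴, ‖v₁‖₂⁴, ‖v₂‖₂⁴). -/

import Mathlib

noncomputable section

open scoped BigOperators

/-- The point of the Boolean hypercube associated with a Boolean string. -/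
def sgnVec {n : ℕ} (b : Fin n → Bool) : Fin n → ℝ := fun i => if b i then 1 else -1

/-- Euclidean inner product on ℝ^n. -/
def dotR {n : ℕ} (u x : Fin n → ℝ) : ℝ := ∑ i, u i * x i

/-- Discrete derivative on the cube: `∂_i F(x) = (F(x^{i+}) − F(x^{i−}))/2`. -/
def dderiv {n : ℕ} (F : (Fin n → Bool) → ℝ) (i : Fin n) (b : Fin n → Bool) : ℝ :=
  (F (Function.update b i true) - F (Function.update b i false)) / 2

/-- The derivative matrix `D^F_{ij} = max_x |∂_i ∂_j F(x)|`. -/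
def derivMat {n : ℕ} (F : (Fin n → Bool) → ℝ) (i j : Fin n) : ℝ :=
  ⨆ b : Fin n → Bool, |dderiv (dderiv F j) i b|

/-- The `ℓ²→ℓ²` operator norm of an `n×n` matrix. -/
def matOpNorm {n : ℕ} (M : Fin n → Fin n → ℝ) : ℝ :=
  sSup { r : ℝ | ∃ x : Fin n → ℝ, (∑ i, x i ^ 2) = 1 ∧
    r = Real.sqrt (∑ i, (∑ j, M i j * x j) ^ 2) }

/-!
Write `⟨u₁,x⟩² + ⟨u₂,x⟩² = ‖∑ₗ xₗ aₗ‖²` with `aₗ = (u₁ l, u₂ l) ∈ ℝ²`, and likewise with `cₗ`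
for the `v`'s. Orthogonality gives the Bessel-type bound `‖∑ₗ xₗ aₗ‖² ≤ n S` on the cube, where
`S` is the largest of the four squared norms. As a function of the coordinates `xᵢ, xⱼ` (`i ≠ j`)
each factor is `‖p ± aᵢ ± aⱼ‖²`, so `∂ᵢ∂ⱼF̃` is a mixed second difference that sees only the
`xᵢxⱼ` coefficients; Cauchy–Schwarz bounds it by
`2nS(‖aᵢ‖‖aⱼ‖ + ‖cᵢ‖‖cⱼ‖) + 4nS(‖aᵢ‖‖cⱼ‖ + ‖aⱼ‖‖cᵢ‖)`. Hence `D^F̃` is dominated entrywise by a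
sum of four rank-one matrices, of operator norm at most `24 n S²`.
-/

open scoped RealInnerProductSpace

section InnerProductSpace

variable {E : Type*} [NormedAddCommGroup E] [InnerProductSpace ℝ E]

theorem inner_sq_add_inner_sq_le_of_inner_eq_zero {u₁ u₂ : E} (h : ⟪u₁, u₂⟫ = 0) (x : E) :
    ⟪u₁, x⟫ ^ 2 + ⟪u₂, x⟫ ^ 2 ≤ max (‖u₁‖ ^ 2) (‖u₂‖ ^ 2) * ‖x‖ ^ 2 := by
  set T := ⟪u₁, x⟫ ^ 2 + ⟪u₂, x⟫ ^ 2
  set M := max (‖u₁‖ ^ 2) (‖u₂‖ ^ 2)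
  set w := ⟪u₁, x⟫ • u₁ + ⟪u₂, x⟫ • u₂
  have hT : 0 ≤ T := by positivity
  have hTw : T = ⟪w, x⟫ := by simp only [w, T, inner_add_left, inner_smul_left]; simp [sq]
  have hw : ‖w‖ ^ 2 ≤ M * T := by
    have hw' : ‖w‖ ^ 2 = ⟪u₁, x⟫ ^ 2 * ‖u₁‖ ^ 2 + ⟪u₂, x⟫ ^ 2 * ‖u₂‖ ^ 2 := by
      rw [norm_add_sq_real, inner_smul_left, inner_smul_right, h, norm_smul, norm_smul]
      simp [mul_pow]
    rw [hw']
    nlinarith [le_max_left (‖u₁‖ ^ 2) (‖u₂‖ ^ 2), le_max_right (‖u₁‖ ^ 2) (‖u₂‖ ^ 2),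
      sq_nonneg ⟪u₁, x⟫, sq_nonneg ⟪u₂, x⟫]
  have hT2 : T * T ≤ (M * ‖x‖ ^ 2) * T := calc
    T * T = ⟪w, x⟫ ^ 2 := by rw [hTw, sq]
    _ ≤ ‖w‖ ^ 2 * ‖x‖ ^ 2 := by
      rw [← mul_pow, ← sq_abs]; gcongr; exact abs_real_inner_le_norm w x
    _ ≤ (M * T) * ‖x‖ ^ 2 := by gcongr
    _ = (M * ‖x‖ ^ 2) * T := by ring
  rcases hT.eq_or_lt with hT0 | hT0
  · rw [← hT0]; positivity
  · exact le_of_mul_le_mul_right hT2 hT0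

theorem norm_add_add_sq (p a b : E) :
    ‖p + a + b‖ ^ 2 = ‖p‖ ^ 2 + ‖a‖ ^ 2 + ‖b‖ ^ 2 + 2 * (⟪p, a⟫ + ⟪p, b⟫ + ⟪a, b⟫) := by
  rw [norm_add_sq_real, norm_add_sq_real, inner_add_left]; ring

theorem norm_sq_sum_corners (p a b : E) :
    ‖p + a + b‖ ^ 2 + ‖p + a - b‖ ^ 2 + ‖p - a + b‖ ^ 2 + ‖p - a - b‖ ^ 2 =
      4 * (‖p‖ ^ 2 + ‖a‖ ^ 2 + ‖b‖ ^ 2) := by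
  simp only [sub_eq_add_neg, norm_add_add_sq, norm_neg, inner_neg_left, inner_neg_right]
  ring

theorem abs_mixedDiff_norm_sq_mul_norm_sq_le {p a b q c d : E} {N : ℝ}
    (hA : ‖p‖ ^ 2 + ‖a‖ ^ 2 + ‖b‖ ^ 2 ≤ N) (hB : ‖q‖ ^ 2 + ‖c‖ ^ 2 + ‖d‖ ^ 2 ≤ N) :
    |(‖p + a + b‖ ^ 2 * ‖q + c + d‖ ^ 2 - ‖p + a - b‖ ^ 2 * ‖q + c - d‖ ^ 2
        - ‖p - a + b‖ ^ 2 * ‖q - c + d‖ ^ 2 + ‖p - a - b‖ ^ 2 * ‖q - c - d‖ ^ 2) / 4| ≤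
      2 * N * (‖a‖ * ‖b‖ + ‖c‖ * ‖d‖) + 4 * N * (‖a‖ * ‖d‖ + ‖b‖ * ‖c‖) := by
  set A := ‖p‖ ^ 2 + ‖a‖ ^ 2 + ‖b‖ ^ 2
  set B := ‖q‖ ^ 2 + ‖c‖ ^ 2 + ‖d‖ ^ 2
  -- the corner values are `A + 2s⟪p,a⟫ + 2t⟪p,b⟫ + 2st⟪a,b⟫`; only the `st` coefficients survive
  have hexpand : (‖p + a + b‖ ^ 2 * ‖q + c + d‖ ^ 2 - ‖p + a - b‖ ^ 2 * ‖q + c - d‖ ^ 2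
        - ‖p - a + b‖ ^ 2 * ‖q - c + d‖ ^ 2 + ‖p - a - b‖ ^ 2 * ‖q - c - d‖ ^ 2) / 4 =
      A * (2 * ⟪c, d⟫) + 2 * ⟪p, a⟫ * (2 * ⟪q, d⟫) + 2 * ⟪p, b⟫ * (2 * ⟪q, c⟫)
        + 2 * ⟪a, b⟫ * B := by
    simp only [sub_eq_add_neg, norm_add_add_sq, norm_neg, inner_neg_left, inner_neg_right, A, B]
    ring
  have hA0 : 0 ≤ A := by positivity
  have hB0 : 0 ≤ B := by positivity
  have hpq : ‖p‖ * ‖q‖ ≤ N := by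
    nlinarith [two_mul_le_add_sq ‖p‖ ‖q‖, sq_nonneg ‖a‖, sq_nonneg ‖b‖, sq_nonneg ‖c‖,
      sq_nonneg ‖d‖]
  have hcs (x y : E) : |2 * ⟪x, y⟫| ≤ 2 * (‖x‖ * ‖y‖) := by
    rw [abs_mul, abs_two]; gcongr; exact abs_real_inner_le_norm x y
  rw [hexpand]
  have hN : 0 ≤ N := hA0.trans hA
  calc _ ≤ |A * (2 * ⟪c, d⟫)| + |2 * ⟪p, a⟫ * (2 * ⟪q, d⟫)| + |2 * ⟪p, b⟫ * (2 * ⟪q, c⟫)|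
        + |2 * ⟪a, b⟫ * B| := (abs_add_le _ _).trans (add_le_add_left (abs_add_three _ _ _) _)
    _ ≤ N * (2 * (‖c‖ * ‖d‖)) + 2 * (‖p‖ * ‖a‖) * (2 * (‖q‖ * ‖d‖))
        + 2 * (‖p‖ * ‖b‖) * (2 * (‖q‖ * ‖c‖)) + 2 * (‖a‖ * ‖b‖) * N := by
      rw [abs_mul A, abs_mul (2 * ⟪p, a⟫), abs_mul (2 * ⟪p, b⟫), abs_mul (2 * ⟪a, b⟫),
        abs_of_nonneg hA0, abs_of_nonneg hB0]
      gcongr <;> exact hcs _ _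
    _ ≤ _ := by
      nlinarith [mul_le_mul_of_nonneg_right hpq (by positivity : 0 ≤ ‖a‖ * ‖d‖),
        mul_le_mul_of_nonneg_right hpq (by positivity : 0 ≤ ‖b‖ * ‖c‖)]

end InnerProductSpace

theorem matOpNorm_le_sum_norm_mul_norm {ι : Type*} [Fintype ι] {n : ℕ} (M : Fin n → Fin n → ℝ)
    (P Q : ι → EuclideanSpace ℝ (Fin n)) (h : ∀ i j, |M i j| ≤ ∑ k, P k i * Q k j) :
    matOpNorm M ≤ ∑ k, ‖P k‖ * ‖Q k‖ := by
  apply Real.sSup_le _ (Finset.sum_nonneg fun k _ => by positivity)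
  rintro _ ⟨x, hx, rfl⟩
  set y : EuclideanSpace ℝ (Fin n) := WithLp.toLp 2 fun j => |x j|
  have hy : ‖y‖ = 1 := by simp [y, EuclideanSpace.norm_eq, hx]
  set w := ∑ k, ⟪Q k, y⟫ • P k
  have hrow (i : Fin n) : |∑ j, M i j * x j| ≤ w i := calc
    |∑ j, M i j * x j| ≤ ∑ j, |M i j| * |x j| := by
      simpa only [abs_mul] using Finset.abs_sum_le_sum_abs (fun j => M i j * x j) Finset.univ
    _ ≤ ∑ j, (∑ k, P k i * Q k j) * |x j| := by gcongr with j; exact h i j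
    _ = w i := by
      simp only [w, y, PiLp.inner_apply, Real.inner_apply, WithLp.ofLp_sum, PiLp.smul_apply,
        Finset.sum_apply, smul_eq_mul, Finset.sum_mul]
      rw [Finset.sum_comm]
      exact Finset.sum_congr rfl fun k _ => Finset.sum_congr rfl fun j _ => by ring
  calc √(∑ i, (∑ j, M i j * x j) ^ 2) ≤ ‖w‖ := by
        rw [EuclideanSpace.norm_eq]
        refine Real.sqrt_le_sqrt (Finset.sum_le_sum fun i _ => ?_)
        rw [Real.norm_eq_abs, sq_abs]
        exact sq_le_sq.2 ((hrow i).trans (le_abs_self _))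
    _ ≤ ∑ k, ‖⟪Q k, y⟫ • P k‖ := norm_sum_le _ _
    _ ≤ ∑ k, ‖P k‖ * ‖Q k‖ := by
        gcongr with k
        rw [norm_smul, Real.norm_eq_abs, mul_comm]
        gcongr
        simpa [hy] using abs_real_inner_le_norm (Q k) y

section Cube

variable {E : Type*} {n : ℕ}

def signedSum [AddCommGroup E] [Module ℝ E] (a : Fin n → E) (b : Fin n → Bool) : E :=
  ∑ l, sgnVec b l • a l

theorem signedSum_update_true [AddCommGroup E] [Module ℝ E] (a : Fin n → E) (b : Fin n → Bool)
    (i : Fin n) :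
    signedSum a (Function.update b i true) =
      signedSum a (Function.update b i false) + (2 : ℝ) • a i := by
  have hsgn : ∀ l, sgnVec (Function.update b i true) l =
      sgnVec (Function.update b i false) l + (Pi.single i 2 : Fin n → ℝ) l := by
    intro l
    rcases eq_or_ne l i with rfl | hl
    · norm_num [sgnVec]
    · simp [sgnVec, hl]
  simp only [signedSum, hsgn, add_smul, Finset.sum_add_distrib, Pi.single_apply, ite_smul,
    zero_smul, Finset.sum_ite_eq', Finset.mem_univ, if_true]

theorem dderiv_dderiv (F : (Fin n → Bool) → ℝ) (i j : Fin n) (b : Fin n → Bool) :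
    dderiv (dderiv F j) i b =
      (F (Function.update (Function.update b i true) j true)
        - F (Function.update (Function.update b i true) j false)
        - F (Function.update (Function.update b i false) j true)
        + F (Function.update (Function.update b i false) j false)) / 4 := by
  simp only [dderiv]; ring

theorem abs_derivMat_le {F : (Fin n → Bool) → ℝ} {i j : Fin n} {C : ℝ}
    (h : ∀ b, |dderiv (dderiv F j) i b| ≤ C) : |derivMat F i j| ≤ C := by
  rw [derivMat, abs_of_nonneg (Real.iSup_nonneg fun b => abs_nonneg _)]
  exact ciSup_le h

theorem exists_signedSum_corners [AddCommGroup E] [Module ℝ E] (a : Fin n → E) (b : Fin n → Bool)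
    {i j : Fin n} (hij : i ≠ j) : ∃ p : E,
    signedSum a (Function.update (Function.update b i true) j true) = p + a i + a j ∧
    signedSum a (Function.update (Function.update b i true) j false) = p + a i - a j ∧
    signedSum a (Function.update (Function.update b i false) j true) = p - a i + a j ∧
    signedSum a (Function.update (Function.update b i false) j false) = p - a i - a j := by
  have hTF : signedSum a (Function.update (Function.update b i true) j false) =
      signedSum a (Function.update (Function.update b i false) j false) + (2 : ℝ) • a i := by
    rw [Function.update_comm hij, signedSum_update_true, Function.update_comm hij.symm]
  refine ⟨signedSum a (Function.update (Function.update b i false) j false) + a i + a j,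
    ?_, ?_, ?_, ?_⟩
  · rw [signedSum_update_true, hTF]; module
  · rw [hTF]; module
  · rw [signedSum_update_true]; module
  · module

variable [NormedAddCommGroup E] [InnerProductSpace ℝ E]

theorem abs_dderiv_dderiv_norm_sq_mul_norm_sq_le (a c : Fin n → E) {N : ℝ}
    (ha : ∀ b, ‖signedSum a b‖ ^ 2 ≤ N) (hc : ∀ b, ‖signedSum c b‖ ^ 2 ≤ N)
    (i j : Fin n) (b : Fin n → Bool) :
    |dderiv (dderiv (fun b => ‖signedSum a b‖ ^ 2 * ‖signedSum c b‖ ^ 2) j) i b| ≤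
      2 * N * (‖a i‖ * ‖a j‖ + ‖c i‖ * ‖c j‖) + 4 * N * (‖a i‖ * ‖c j‖ + ‖a j‖ * ‖c i‖) := by
  rw [dderiv_dderiv]
  rcases eq_or_ne i j with rfl | hij
  · have hN : 0 ≤ N := (sq_nonneg _).trans (ha b)
    simp only [Function.update_idem, sub_sub_cancel_left, neg_add_cancel, zero_div, abs_zero]
    positivity
  -- parallelogram law: `‖p‖² + ‖xᵢ‖² + ‖xⱼ‖²` is the mean of the four corner values
  have hcorners (x : Fin n → E) (hx : ∀ b, ‖signedSum x b‖ ^ 2 ≤ N) {p : E}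
      (h₁ : signedSum x (Function.update (Function.update b i true) j true) = p + x i + x j)
      (h₂ : signedSum x (Function.update (Function.update b i true) j false) = p + x i - x j)
      (h₃ : signedSum x (Function.update (Function.update b i false) j true) = p - x i + x j)
      (h₄ : signedSum x (Function.update (Function.update b i false) j false) = p - x i - x j) :
      ‖p‖ ^ 2 + ‖x i‖ ^ 2 + ‖x j‖ ^ 2 ≤ N := by
    have := norm_sq_sum_corners p (x i) (x j)
    rw [← h₁, ← h₂, ← h₃, ← h₄] at this
    linarith [hx (Function.update (Function.update b i true) j true),
      hx (Function.update (Function.update b i true) j false),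
      hx (Function.update (Function.update b i false) j true),
      hx (Function.update (Function.update b i false) j false)]
  obtain ⟨p, ha₁, ha₂, ha₃, ha₄⟩ := exists_signedSum_corners a b hij
  obtain ⟨q, hc₁, hc₂, hc₃, hc₄⟩ := exists_signedSum_corners c b hij
  rw [ha₁, ha₂, ha₃, ha₄, hc₁, hc₂, hc₃, hc₄]
  exact abs_mixedDiff_norm_sq_mul_norm_sq_le (hcorners a ha ha₁ ha₂ ha₃ ha₄)
    (hcorners c hc hc₁ hc₂ hc₃ hc₄)

theorem matOpNorm_derivMat_norm_sq_mul_norm_sq_le (a c : Fin n → E) {N s : ℝ}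
    (ha : ∀ b, ‖signedSum a b‖ ^ 2 ≤ N) (hc : ∀ b, ‖signedSum c b‖ ^ 2 ≤ N)
    (hsa : ∑ l, ‖a l‖ ^ 2 ≤ s) (hsc : ∑ l, ‖c l‖ ^ 2 ≤ s) :
    matOpNorm (derivMat fun b => ‖signedSum a b‖ ^ 2 * ‖signedSum c b‖ ^ 2) ≤ 12 * N * s := by
  have hN : 0 ≤ N := (sq_nonneg _).trans (ha fun _ => false)
  set U : EuclideanSpace ℝ (Fin n) := WithLp.toLp 2 fun l => ‖a l‖
  set V : EuclideanSpace ℝ (Fin n) := WithLp.toLp 2 fun l => ‖c l‖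
  have hU : ‖U‖ ^ 2 ≤ s := by simpa [EuclideanSpace.norm_sq_eq, U] using hsa
  have hV : ‖V‖ ^ 2 ≤ s := by simpa [EuclideanSpace.norm_sq_eq, V] using hsc
  have hUV : ‖U‖ * ‖V‖ ≤ s := by nlinarith [two_mul_le_add_sq ‖U‖ ‖V‖]
  -- `D` is dominated entrywise by `2N (U Uᵀ + V Vᵀ) + 4N (U Vᵀ + V Uᵀ)`
  calc _ ≤ ∑ k, ‖![(2 * N) • U, (2 * N) • V, (4 * N) • U, (4 * N) • V] k‖ * ‖![U, V, V, U] k‖ := by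
        refine matOpNorm_le_sum_norm_mul_norm _ _ _ fun i j => ?_
        refine (abs_derivMat_le fun b =>
          abs_dderiv_dderiv_norm_sq_mul_norm_sq_le a c ha hc i j b).trans_eq ?_
        simp only [Fin.sum_univ_four, Fin.isValue, Matrix.cons_val_zero, Matrix.cons_val_one,
          Matrix.cons_val, PiLp.smul_apply, smul_eq_mul, U, V]
        ring
    _ = 2 * N * ‖U‖ ^ 2 + 2 * N * ‖V‖ ^ 2 + 8 * N * (‖U‖ * ‖V‖) := by
        simp only [Fin.sum_univ_four, Fin.isValue, Matrix.cons_val_zero, Matrix.cons_val_one,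
          Matrix.cons_val, norm_smul, norm_mul, Real.norm_ofNat, Real.norm_eq_abs, abs_of_nonneg hN]
        ring
    _ ≤ 12 * N * s := by nlinarith

end Cube

section Pairs

variable {n : ℕ}

theorem dotR_eq_inner (u x : Fin n → ℝ) : dotR u x = ⟪WithLp.toLp 2 u, WithLp.toLp 2 x⟫ := by
  simp [dotR, PiLp.inner_apply, mul_comm]

theorem sum_sq_eq_norm_sq (u : Fin n → ℝ) : ∑ i, u i ^ 2 = ‖WithLp.toLp 2 u‖ ^ 2 := by
  simp [EuclideanSpace.norm_sq_eq]

theorem sum_sgnVec_sq (b : Fin n → Bool) : ∑ i, sgnVec b i ^ 2 = n := by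
  have (i : Fin n) : sgnVec b i ^ 2 = 1 := by unfold sgnVec; split_ifs <;> norm_num
  simp [this]

theorem dotR_sq_add_dotR_sq_le {u₁ u₂ : Fin n → ℝ} (hu : dotR u₁ u₂ = 0) (x : Fin n → ℝ) :
    dotR u₁ x ^ 2 + dotR u₂ x ^ 2 ≤ max (∑ i, u₁ i ^ 2) (∑ i, u₂ i ^ 2) * ∑ i, x i ^ 2 := by
  simp only [dotR_eq_inner, sum_sq_eq_norm_sq] at hu ⊢
  exact inner_sq_add_inner_sq_le_of_inner_eq_zero hu _

theorem norm_signedSum_pair_sq (u₁ u₂ : Fin n → ℝ) (b : Fin n → Bool) :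
    ‖signedSum (fun l => !₂[u₁ l, u₂ l]) b‖ ^ 2 =
      dotR u₁ (sgnVec b) ^ 2 + dotR u₂ (sgnVec b) ^ 2 := by
  simp [EuclideanSpace.norm_sq_eq, signedSum, dotR, Fin.sum_univ_two, mul_comm]

theorem sum_norm_pair_sq (u₁ u₂ : Fin n → ℝ) :
    ∑ l, ‖!₂[u₁ l, u₂ l]‖ ^ 2 = ∑ i, u₁ i ^ 2 + ∑ i, u₂ i ^ 2 := by
  simp [EuclideanSpace.norm_sq_eq, Fin.sum_univ_two, Finset.sum_add_distrib]

theorem norm_signedSum_pair_sq_le {u₁ u₂ : Fin n → ℝ} (hu : dotR u₁ u₂ = 0) (b : Fin n → Bool) :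
    ‖signedSum (fun l => !₂[u₁ l, u₂ l]) b‖ ^ 2 ≤ n * max (∑ i, u₁ i ^ 2) (∑ i, u₂ i ^ 2) := by
  rw [norm_signedSum_pair_sq, mul_comm, ← sum_sgnVec_sq b]
  exact dotR_sq_add_dotR_sq_le hu _

end Pairs

theorem max_max_sq_le (a b c d : ℝ) :
    max (max a b) (max c d) ^ 2 ≤ max (max (a ^ 2) (b ^ 2)) (max (c ^ 2) (d ^ 2)) := by
  rcases max_choice a b with h | h <;> rcases max_choice c d with h' | h' <;>
    rcases max_choice (max a b) (max c d) with h'' | h'' <;> simp_all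

/-- Derivative-matrix bound for
`F̃(x) = (⟨u₁,x⟩² + ⟨u₂,x⟩²)(⟨v₁,x⟩² + ⟨v₂,x⟩²)` with orthogonal pairs
(second part of Lemma `vectorproductdob` of the paper). -/
theorem derivMat_quartic_pairs (n : ℕ) (u₁ u₂ v₁ v₂ : Fin n → ℝ)
    (hu : dotR u₁ u₂ = 0) (hv : dotR v₁ v₂ = 0) :
    matOpNorm (derivMat (fun b =>
        (dotR u₁ (sgnVec b) ^ 2 + dotR u₂ (sgnVec b) ^ 2) *
        (dotR v₁ (sgnVec b) ^ 2 + dotR v₂ (sgnVec b) ^ 2))) ≤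
      40 * n * max (max ((∑ i, u₁ i ^ 2) ^ 2) ((∑ i, u₂ i ^ 2) ^ 2))
        (max ((∑ i, v₁ i ^ 2) ^ 2) ((∑ i, v₂ i ^ 2) ^ 2)) := by
  set S := max (max (∑ i, u₁ i ^ 2) (∑ i, u₂ i ^ 2)) (max (∑ i, v₁ i ^ 2) (∑ i, v₂ i ^ 2))
  have hS (w₁ w₂ : Fin n → ℝ) (hmax : max (∑ i, w₁ i ^ 2) (∑ i, w₂ i ^ 2) ≤ S) :
      ∑ l, ‖!₂[w₁ l, w₂ l]‖ ^ 2 ≤ 2 * S := by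
    rw [sum_norm_pair_sq]
    linarith [(le_max_left _ _).trans hmax, (le_max_right _ _).trans hmax]
  have hN (w₁ w₂ : Fin n → ℝ) (hw : dotR w₁ w₂ = 0)
      (hmax : max (∑ i, w₁ i ^ 2) (∑ i, w₂ i ^ 2) ≤ S) (b : Fin n → Bool) :
      ‖signedSum (fun l => !₂[w₁ l, w₂ l]) b‖ ^ 2 ≤ n * S :=
    (norm_signedSum_pair_sq_le hw b).trans (by gcongr)
  simp only [← norm_signedSum_pair_sq]
  calc _ ≤ 12 * (n * S) * (2 * S) :=
        matOpNorm_derivMat_norm_sq_mul_norm_sq_le _ _ (hN u₁ u₂ hu (le_max_left _ _))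
          (hN v₁ v₂ hv (le_max_right _ _)) (hS u₁ u₂ (le_max_left _ _))
          (hS v₁ v₂ (le_max_right _ _))
    _ ≤ 40 * n * S ^ 2 := by nlinarith [(by positivity : 0 ≤ (n : ℝ) * S ^ 2)]
    _ ≤ _ := by gcongr; exact max_max_sq_le _ _ _ _
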